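/- arXiv:2309.11102 — 7 statements merged into one kernel-verified Lean document; each statement's English description precedes it below -/
import Mathlib

section
/- Every equivalence class of the relation ∼_𝒢 on A^ℕ has at most two elements. -/
/-- The relation `∼_𝒢` on `A^ℕ` associated with the adjacency relation `Adj` of a
graph on `A`: `x ∼ y` iff `x = y`, or `x = s a b b b ⋯` and `y = s b a a a ⋯`
for some finite word `s` (of length `n`) and some edge `{a,b}`. -/
def GRel {A : Type*} (Adj : A → A → Prop) (x y : ℕ → A) : Prop :=
  x = y ∨ ∃ (n : ℕ) (a b : A), Adj a b ∧ (∀ m < n, x m = y m) ∧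
    x n = a ∧ y n = b ∧ ∀ m, n < m → x m = b ∧ y m = a

/-- Every equivalence class of `∼_𝒢` has at most two elements: any two elements
related to `x` are either equal to each other or one of them equals `x`. -/
theorem stmt3 {A : Type*} (hA : ∃ a b : A, a ≠ b) (Adj : A → A → Prop)
    (hrefl : ∀ a, Adj a a) (hsymm : ∀ a b, Adj a b → Adj b a) :
    ∀ x y z : ℕ → A, GRel Adj x y → GRel Adj x z → y = z ∨ y = x ∨ z = x := by
  intro x y z hxy hxz
  rcases hxy with rfl | ⟨n, a, b, hab, h1, h2, h3, h4⟩
  · exact Or.inr (Or.inl rfl)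
  rcases hxz with rfl | ⟨n', a', b', hab', h1', h2', h3', h4'⟩
  · exact Or.inr (Or.inr rfl)
  rcases lt_trichotomy n n' with h | rfl | h
  · right; right
    have hbb : b = b' := by
      rw [← (h4 (n'+1) (by omega)).1, (h4' (n'+1) (by omega)).1]
    funext m
    rcases lt_trichotomy m n' with hm | rfl | hm
    · exact (h1' m hm).symm
    · rw [h3', ← hbb, (h4 m h).1]
    · rw [(h4' m hm).2, ← h2', (h4 n' h).1, (h4 m (lt_trans h hm)).1]
  · left
    have haa : a = a' := by rw [← h2, h2']
    have hbb : b = b' := by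
      rw [← (h4 (n+1) (by omega)).1, (h4' (n+1) (by omega)).1]
    funext m
    rcases lt_trichotomy m n with hm | rfl | hm
    · rw [← h1 m hm, h1' m hm]
    · rw [h3, hbb, ← h3']
    · rw [(h4 m hm).2, haa, ← (h4' m hm).2]
  · right; left
    have hbb : b = b' := by
      rw [← (h4 (n+1) (by omega)).1, (h4' (n+1) (by omega)).1]
    funext m
    rcases lt_trichotomy m n with hm | rfl | hm
    · exact (h1 m hm).symm
    · rw [h3, hbb, (h4' m h).1]
    · rw [(h4 m hm).2, ← h2, (h4' n h).1, (h4' m (lt_trans h hm)).1]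
end

section
/- The map p_𝒢 : A^ℕ → ℓ²(A') defined by p_𝒢(x) = (α_b(x))_{b∈A'}, where α_b(x) = Σ_{i=1}^∞ ∏_{j=1}^{i} c_{x_j x_i b}, is continuous with respect to the Baire metric on A^ℕ and the ℓ² norm. -/
open Classical in
/-- The Baire distance on `ℕ → A` (sequences indexed from `0`). -/
noncomputable def baireDist {A : Type*} (x y : ℕ → A) : ℝ :=
  if x = y then 0 else 1 / ((sInf {n : ℕ | x n ≠ y n} + 1 : ℕ) : ℝ)

open Classical in
/-- The coefficients `c_{a a' b}` of graph Lipscomb theory. -/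
noncomputable def lipC {A : Type*} (Adj : A → A → Prop) (a a' b : A) : ℝ :=
  if a' = b then (if Adj a a' then 1 / 2 else 1 / 3) else 0

set_option maxHeartbeats 1000000

noncomputable def lipF {A : Type*} (Adj : A → A → Prop) (w : ℕ → A) (b : A) (i : ℕ) : ℝ :=
  ∏ j ∈ Finset.range (i + 1), lipC Adj (w j) (w i) b

lemma lipC_nonneg {A : Type*} (Adj : A → A → Prop) (a a' b : A) : 0 ≤ lipC Adj a a' b := by
  unfold lipC; split_ifs <;> norm_num

lemma lipC_le_half {A : Type*} (Adj : A → A → Prop) (a a' b : A) : lipC Adj a a' b ≤ 1/2 := by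
  unfold lipC; split_ifs <;> norm_num

lemma lipF_nonneg {A : Type*} (Adj : A → A → Prop) (w : ℕ → A) (b : A) (i : ℕ) :
    0 ≤ lipF Adj w b i :=
  Finset.prod_nonneg fun j _ => lipC_nonneg Adj (w j) (w i) b

lemma lipF_le {A : Type*} (Adj : A → A → Prop) (w : ℕ → A) (b : A) (i : ℕ) :
    lipF Adj w b i ≤ (1/2)^(i+1) := by
  have : lipF Adj w b i ≤ ∏ _j ∈ Finset.range (i+1), (1/2 : ℝ) :=
    Finset.prod_le_prod (fun j _ => lipC_nonneg Adj (w j) (w i) b)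
      (fun j _ => lipC_le_half Adj (w j) (w i) b)
  simpa using this

lemma lipF_eq_zero {A : Type*} (Adj : A → A → Prop) (w : ℕ → A) (b : A) (i : ℕ)
    (h : w i ≠ b) : lipF Adj w b i = 0 := by
  refine Finset.prod_eq_zero (Finset.self_mem_range_succ i) ?_
  unfold lipC; simp [h]

lemma lipF_summable {A : Type*} (Adj : A → A → Prop) (w : ℕ → A) (b : A) :
    Summable (lipF Adj w b) := by
  refine Summable.of_nonneg_of_le (lipF_nonneg Adj w b) (lipF_le Adj w b) ?_
  have : Summable (fun i : ℕ => (1/2:ℝ)^i) := summable_geometric_of_lt_one (by norm_num) (by norm_num)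
  simpa [pow_succ, mul_comm] using this.mul_right (1/2 : ℝ)

lemma lipF_zero_of_ne {A : Type*} (Adj : A → A → Prop) (w : ℕ → A) (z : A) (i : ℕ)
    (b : {a : A // a ≠ z}) (h : ∀ (hw : w i ≠ z), b ≠ (⟨w i, hw⟩ : {a : A // a ≠ z})) :
    lipF Adj w (b : A) i = 0 := by
  apply lipF_eq_zero
  intro hwb
  have hb : (b : A) ≠ z := b.2
  have hw : w i ≠ z := by rw [hwb]; exact hb
  exact h hw (Subtype.ext hwb.symm)

lemma lipF_summable_b {A : Type*} (Adj : A → A → Prop) (w : ℕ → A) (z : A) (i : ℕ) :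
    Summable (fun b : {a : A // a ≠ z} => lipF Adj w (b : A) i) := by
  by_cases h : w i ≠ z
  · apply summable_of_ne_finset_zero (s := {(⟨w i, h⟩ : {a : A // a ≠ z})})
    intro b hb
    exact lipF_zero_of_ne Adj w z i b (fun _ => by simpa using hb)
  · apply summable_of_ne_finset_zero (s := (∅ : Finset {a : A // a ≠ z}))
    intro b _
    exact lipF_zero_of_ne Adj w z i b (fun hw => absurd hw h)

lemma tsum_lipF_b_le {A : Type*} (Adj : A → A → Prop) (w : ℕ → A) (z : A) (i : ℕ) :
    ∑' b : {a : A // a ≠ z}, lipF Adj w (b : A) i ≤ (1/2)^(i+1) := by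
  by_cases h : w i ≠ z
  · rw [tsum_eq_single (⟨w i, h⟩ : {a : A // a ≠ z})
      (fun b hb => lipF_zero_of_ne Adj w z i b (fun _ => hb))]
    exact lipF_le Adj w _ i
  · have h0 : ∀ b : {a : A // a ≠ z}, lipF Adj w (b : A) i = 0 :=
      fun b => lipF_zero_of_ne Adj w z i b (fun hw => absurd hw h)
    rw [tsum_congr h0, tsum_zero]
    positivity

lemma lip_key {A : Type*} (Adj : A → A → Prop) (z : A) (x y : ℕ → A) (M : ℕ) (hM : 1 ≤ M)
    (hagree : ∀ n < M, x n = y n) :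
    ∑' b : {a : A // a ≠ z},
      ((∑' i, lipF Adj y (b : A) i) - ∑' i, lipF Adj x (b : A) i) ^ 2 ≤ 2 * (1/2) ^ M := by
  set B := {a : A // a ≠ z} with hB
  set K : B → ℕ → ℝ := fun b i => lipF Adj y (b : A) (i + M) + lipF Adj x (b : A) (i + M)
    with hK
  have hK0 : ∀ b i, 0 ≤ K b i := fun b i =>
    add_nonneg (lipF_nonneg Adj y _ _) (lipF_nonneg Adj x _ _)
  have hKle : ∀ b i, K b i ≤ 2 * (1/2)^(i+M+1) := by
    intro b i
    have h1 := lipF_le Adj y (b : A) (i+M)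
    have h2 := lipF_le Adj x (b : A) (i+M)
    simp only [hK]
    ring_nf
    ring_nf at h1 h2
    linarith
  have hys : ∀ b : B, Summable (fun i => lipF Adj y (b : A) (i + M)) :=
    fun b => (summable_nat_add_iff M).2 (lipF_summable Adj y b)
  have hxs : ∀ b : B, Summable (fun i => lipF Adj x (b : A) (i + M)) :=
    fun b => (summable_nat_add_iff M).2 (lipF_summable Adj x b)
  have hKb : ∀ b, Summable (K b) := fun b => (hys b).add (hxs b)
  have hgeo_eq : (fun i : ℕ => 2*(1/2:ℝ)^(i+M+1)) = fun i => (2*(1/2:ℝ)^(M+1)) * (1/2)^i := by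
    funext i; rw [show i + M + 1 = (M+1) + i by ring, pow_add]; ring
  have Sg : Summable (fun i : ℕ => 2*(1/2:ℝ)^(i+M+1)) := by
    rw [hgeo_eq]
    exact (summable_geometric_of_lt_one (by norm_num) (by norm_num)).mul_left _
  have hgeo_tsum : ∑' i : ℕ, 2*(1/2:ℝ)^(i+M+1) = 2 * (1/2)^M := by
    rw [hgeo_eq, tsum_mul_left, tsum_geometric_of_lt_one (by norm_num) (by norm_num),
      pow_succ]
    norm_num
    ring
  have hsb : ∀ i : ℕ, Summable (fun b : B => K b i) :=
    fun i => (lipF_summable_b Adj y z (i+M)).add (lipF_summable_b Adj x z (i+M))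
  have htb : ∀ i : ℕ, ∑' b : B, K b i ≤ 2*(1/2)^(i+M+1) := by
    intro i
    simp only [hK]
    rw [Summable.tsum_add (lipF_summable_b Adj y z (i+M)) (lipF_summable_b Adj x z (i+M))]
    have h1 := tsum_lipF_b_le Adj y z (i+M)
    have h2 := tsum_lipF_b_le Adj x z (i+M)
    linarith
  have hv : Summable (fun q : ℕ × B => K q.2 q.1) := by
    refine (summable_prod_of_nonneg (fun q => hK0 q.2 q.1)).2 ⟨fun i => hsb i, ?_⟩
    exact Summable.of_nonneg_of_le (fun i => tsum_nonneg (fun b => hK0 b i)) htb Sg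
  have hvsum : Summable (fun i : ℕ => ∑' b : B, K b i) :=
    ((summable_prod_of_nonneg (fun q : ℕ × B => hK0 q.2 q.1)).1 hv).2
  have hu : Summable (Function.uncurry K) := by
    have := hv.prod_symm
    exact this
  have hL : Summable (fun b : B => ∑' i, K b i) :=
    ((summable_prod_of_nonneg (fun q : B × ℕ => hK0 q.1 q.2)).1 hu).2
  have hswap : ∑' (b : B), ∑' (i : ℕ), K b i = ∑' (i : ℕ), ∑' (b : B), K b i :=
    (Summable.tsum_comm' hu hKb hsb).symm
  have hLbound : ∑' b : B, ∑' i, K b i ≤ 2 * (1/2)^M := by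
    rw [hswap]
    exact le_trans (Summable.tsum_le_tsum htb hvsum Sg) hgeo_tsum.le
  have hKmono : ∀ b : B, ∑' i, K b i ≤ 2*(1/2)^M :=
    fun b => le_trans (Summable.tsum_le_tsum (hKle b) (hKb b) Sg) hgeo_tsum.le
  have h2M : 2*(1/2:ℝ)^M ≤ 1 := by
    have : (1/2:ℝ)^M ≤ (1/2)^1 := pow_le_pow_of_le_one (by norm_num) (by norm_num) hM
    norm_num at this; linarith
  have hDle : ∀ b : B,
      |(∑' i, lipF Adj y (b : A) i) - ∑' i, lipF Adj x (b : A) i| ≤ ∑' i, K b i := by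
    intro b
    set g : ℕ → ℝ := fun i => lipF Adj y (b : A) i - lipF Adj x (b : A) i with hg
    have hgs : Summable g := (lipF_summable Adj y b).sub (lipF_summable Adj x b)
    have h1 : (∑' i, lipF Adj y (b : A) i) - ∑' i, lipF Adj x (b : A) i = ∑' i, g i :=
      (Summable.tsum_sub (lipF_summable Adj y b) (lipF_summable Adj x b)).symm
    have hz : ∑ i ∈ Finset.range M, g i = 0 := by
      apply Finset.sum_eq_zero
      intro i hi
      have hiM : i < M := Finset.mem_range.1 hi
      have heq : lipF Adj y (b : A) i = lipF Adj x (b : A) i := by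
        unfold lipF
        apply Finset.prod_congr rfl
        intro j hj
        have hjM : j < M := lt_of_le_of_lt (Nat.lt_succ_iff.1 (Finset.mem_range.1 hj)) hiM
        rw [← hagree j hjM, ← hagree i hiM]
      simp [hg, heq]
    have h2 : ∑' i, g i = ∑' i, g (i + M) := by
      have h3 := Summable.sum_add_tsum_nat_add (f := g) M hgs
      rw [hz] at h3
      linarith
    have habs : ∀ i : ℕ, |g (i + M)| ≤ K b i := by
      intro i
      have n1 := lipF_nonneg Adj y (b : A) (i + M)
      have n2 := lipF_nonneg Adj x (b : A) (i + M)
      rw [abs_le]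
      constructor <;> simp only [hg, hK] <;> [linarith; linarith]
    have hgabs : Summable (fun i => |g (i + M)|) :=
      Summable.of_nonneg_of_le (fun i => abs_nonneg _) habs (hKb b)
    rw [h1, h2]
    calc |∑' i, g (i + M)| ≤ ∑' i, |g (i + M)| := by
          have hn : Summable (fun i => ‖g (i + M)‖) := by
            simpa only [Real.norm_eq_abs] using hgabs
          have := norm_tsum_le_tsum_norm hn
          simpa only [Real.norm_eq_abs] using this
      _ ≤ ∑' i, K b i := Summable.tsum_le_tsum habs hgabs (hKb b)
  have hterm : ∀ b : B,
      ((∑' i, lipF Adj y (b : A) i) - ∑' i, lipF Adj x (b : A) i) ^ 2 ≤ ∑' i, K b i := by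
    intro b
    set d := (∑' i, lipF Adj y (b : A) i) - ∑' i, lipF Adj x (b : A) i with hd
    have h1 : |d| ≤ ∑' i, K b i := hDle b
    have h2 : ∑' i, K b i ≤ 1 := le_trans (hKmono b) h2M
    nlinarith [abs_nonneg d, sq_abs d]
  have hsq : Summable (fun b : B =>
      ((∑' i, lipF Adj y (b : A) i) - ∑' i, lipF Adj x (b : A) i) ^ 2) :=
    Summable.of_nonneg_of_le (fun b => sq_nonneg _) hterm hL
  exact le_trans (Summable.tsum_le_tsum hterm hsq hL) hLbound

/-- The map `p_𝒢 : A^ℕ → ℓ²(A∖{z})`, whose `b`-th coordinate at `x` is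
`α_b(x) = Σ_i ∏_{j≤i} c_{x_j x_i b}`, is continuous from the Baire metric to the
`ℓ²` norm. -/
theorem stmt5 {A : Type*} (hA : ∃ a b : A, a ≠ b) (Adj : A → A → Prop)
    (hrefl : ∀ a, Adj a a) (hsymm : ∀ a b, Adj a b → Adj b a) (z : A)
    (p : (ℕ → A) → lp (fun _ : {a : A // a ≠ z} => ℝ) 2)
    (hp : ∀ (x : ℕ → A) (b : {a : A // a ≠ z}),
      (p x : ∀ _ : {a : A // a ≠ z}, ℝ) b
        = ∑' i : ℕ, ∏ j ∈ Finset.range (i + 1), lipC Adj (x j) (x i) (b : A)) :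
    ∀ x : ℕ → A, ∀ ε > (0 : ℝ), ∃ δ > (0 : ℝ),
      ∀ y : ℕ → A, baireDist x y < δ → ‖p y - p x‖ < ε := by
  intro x ε hε
  obtain ⟨n, hn⟩ := exists_pow_lt_of_lt_one (show (0:ℝ) < ε^2/2 by positivity)
    (show (1/2:ℝ) < 1 by norm_num)
  set M := max n 1 with hMdef
  have hM1 : 1 ≤ M := le_max_right _ _
  have hMn : (1/2:ℝ)^M ≤ (1/2)^n :=
    pow_le_pow_of_le_one (by norm_num) (by norm_num) (le_max_left _ _)
  have hMε : 2*(1/2:ℝ)^M < ε^2 := by linarith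
  refine ⟨1/((M:ℝ)+1), by positivity, ?_⟩
  intro y hdist
  by_cases hxy : x = y
  · subst hxy
    simpa using hε
  · simp only [baireDist, if_neg hxy] at hdist
    set k := sInf {n : ℕ | x n ≠ y n} with hkdef
    have hk1 : (M:ℝ) + 1 < (k:ℝ) + 1 := by
      push_cast at hdist
      exact lt_of_one_div_lt_one_div (by positivity) hdist
    have hMk : M < k := by exact_mod_cast (by linarith : (M:ℝ) < (k:ℝ))
    have hagree : ∀ m < M, x m = y m := by
      intro m hm
      by_contra hne
      have : k ≤ m := Nat.sInf_le hne
      omega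
    have key := lip_key Adj z x y M hM1 hagree
    have hcoord : ∀ b : {a : A // a ≠ z}, (↑(p y - p x) : ∀ _ : {a : A // a ≠ z}, ℝ) b
        = (∑' i, lipF Adj y (b : A) i) - ∑' i, lipF Adj x (b : A) i := by
      intro b
      have hsub : (↑(p y - p x) : ∀ _ : {a : A // a ≠ z}, ℝ) b
          = (p y : ∀ _ : {a : A // a ≠ z}, ℝ) b - (p x : ∀ _ : {a : A // a ≠ z}, ℝ) b := by
        rw [lp.coeFn_sub]; rfl
      rw [hsub, hp y b, hp x b]; rfl
    have hA2 : ((2:ENNReal).toReal) = (2:ℝ) := by norm_num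
    have hnorm := lp.norm_rpow_eq_tsum (p := (2:ENNReal))
      (E := fun _ : {a : A // a ≠ z} => ℝ) (by rw [hA2]; norm_num) (p y - p x)
    rw [hA2] at hnorm
    have hEq : ∑' b : {a : A // a ≠ z}, ‖(↑(p y - p x) : ∀ _ : {a : A // a ≠ z}, ℝ) b‖ ^ (2:ℝ)
        = ∑' b : {a : A // a ≠ z},
            ((∑' i, lipF Adj y (b : A) i) - ∑' i, lipF Adj x (b : A) i) ^ 2 := by
      refine tsum_congr fun b => ?_
      rw [hcoord b, Real.norm_eq_abs, show (2:ℝ) = ((2:ℕ):ℝ) by norm_num,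
        Real.rpow_natCast, sq_abs]
    have hle : ‖p y - p x‖ ^ (2:ℝ) ≤ 2*(1/2:ℝ)^M := by
      rw [hnorm, hEq]; exact key
    have hlt : ‖p y - p x‖ ^ (2:ℝ) < ε^2 := lt_of_le_of_lt hle hMε
    rw [show (2:ℝ) = ((2:ℕ):ℝ) by norm_num, Real.rpow_natCast] at hlt
    exact lt_of_pow_lt_pow_left₀ 2 hε.le hlt
end

section
/- If x^n is a sequence in the Baire space A^ℕ converging to x, then for every k there exists n_k such that for all n ≥ n_k, the ℓ²-distance between p_𝒢(x^n) and p_𝒢(x) is at most 1/2^{(k-1)/2} (in particular d_e(p_𝒢(x^n),p_𝒢(x))² ≤ 1/2^{k-1} whenever x^n agrees with x on the first k coordinates). -/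
theorem lp.sq_norm_le_of_forall_sum_le {ι : Type*} {E : ι → Type*}
    [∀ i, NormedAddCommGroup (E i)] {C : ℝ} {f : lp E 2}
    (hf : ∀ s : Finset ι, ∑ i ∈ s, ‖f i‖ ^ 2 ≤ C) : ‖f‖ ^ 2 ≤ C := by
  have hC : 0 ≤ C := by simpa using hf ∅
  have hp : (0 : ℝ) < (2 : ENNReal).toReal := by norm_num
  have hnorm : ‖f‖ ≤ √C := lp.norm_le_of_forall_sum_le hp (Real.sqrt_nonneg C) fun s => by
    simpa [Real.sq_sqrt hC] using hf s
  calc ‖f‖ ^ 2 ≤ √C ^ 2 := pow_le_pow_left₀ (norm_nonneg f) hnorm 2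
    _ = C := Real.sq_sqrt hC

theorem sq_sub_le_add_of_mem_Icc {s t : ℝ} (hs : s ∈ Set.Icc (0 : ℝ) 1)
    (ht : t ∈ Set.Icc (0 : ℝ) 1) : (s - t) ^ 2 ≤ s + t := by
  obtain ⟨hs0, hs1⟩ := hs
  obtain ⟨ht0, ht1⟩ := ht
  nlinarith [mul_nonneg hs0 ht0]

theorem tsum_half_pow_add_succ (k : ℕ) : ∑' i : ℕ, (1 / 2 : ℝ) ^ (i + k + 1) = (1 / 2) ^ k := by
  simp_rw [pow_add, tsum_mul_right, tsum_geometric_two]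
  ring

namespace Lipscomb

variable {A : Type*} (Adj : A → A → Prop)

theorem lipC_nonneg (a a' b : A) : 0 ≤ lipC Adj a a' b := by
  unfold lipC
  split_ifs <;> norm_num

theorem lipC_le_half (a a' b : A) : lipC Adj a a' b ≤ 1 / 2 := by
  unfold lipC
  split_ifs <;> norm_num

noncomputable def term (x : ℕ → A) (i : ℕ) (b : A) : ℝ :=
  ∏ j ∈ Finset.range (i + 1), lipC Adj (x j) (x i) b

theorem term_nonneg (x : ℕ → A) (i : ℕ) (b : A) : 0 ≤ term Adj x i b :=
  Finset.prod_nonneg fun _ _ => lipC_nonneg Adj _ _ _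

theorem term_le (x : ℕ → A) (i : ℕ) (b : A) : term Adj x i b ≤ (1 / 2) ^ (i + 1) := by
  calc term Adj x i b ≤ ∏ _j ∈ Finset.range (i + 1), (1 / 2 : ℝ) :=
        Finset.prod_le_prod (fun _ _ => lipC_nonneg Adj _ _ _) fun _ _ => lipC_le_half Adj _ _ _
    _ = (1 / 2) ^ (i + 1) := by rw [Finset.prod_const, Finset.card_range]

theorem term_eq_zero_of_ne (x : ℕ → A) {i : ℕ} {b : A} (h : x i ≠ b) : term Adj x i b = 0 :=
  Finset.prod_eq_zero (Finset.self_mem_range_succ i) (by rw [lipC, if_neg h])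

theorem term_eq_of_eqOn (x y : ℕ → A) {i : ℕ} (h : ∀ j ≤ i, y j = x j) (b : A) :
    term Adj y i b = term Adj x i b :=
  Finset.prod_congr rfl fun j hj => by
    rw [h j (Nat.lt_succ_iff.mp (Finset.mem_range.mp hj)), h i le_rfl]

theorem summable_term_nat_add (x : ℕ → A) (k : ℕ) (b : A) :
    Summable fun i => term Adj x (i + k) b := by
  refine Summable.of_nonneg_of_le (fun i => term_nonneg Adj x _ b) (fun i => term_le Adj x _ b) ?_
  simp_rw [pow_add]
  exact (summable_geometric_two.mul_right _).mul_right _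

theorem summable_term (x : ℕ → A) (b : A) : Summable fun i => term Adj x i b :=
  summable_term_nat_add Adj x 0 b

noncomputable def tail (x : ℕ → A) (k : ℕ) (b : A) : ℝ :=
  ∑' i, term Adj x (i + k) b

theorem tail_nonneg (x : ℕ → A) (k : ℕ) (b : A) : 0 ≤ tail Adj x k b :=
  tsum_nonneg fun _ => term_nonneg Adj x _ b

theorem sum_term_le (x : ℕ → A) (i : ℕ) (S : Finset A) :
    ∑ b ∈ S, term Adj x i b ≤ (1 / 2) ^ (i + 1) := by
  by_cases hi : x i ∈ S
  · rw [Finset.sum_eq_single_of_mem (x i) hi fun b _ hb => term_eq_zero_of_ne Adj x (Ne.symm hb)]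
    exact term_le Adj x i (x i)
  · rw [Finset.sum_eq_zero fun b hb => term_eq_zero_of_ne Adj x fun h => hi (h ▸ hb)]
    positivity

theorem sum_tail_le (x : ℕ → A) (k : ℕ) (S : Finset A) :
    ∑ b ∈ S, tail Adj x k b ≤ (1 / 2) ^ k := by
  have hsum : ∀ b ∈ S, Summable fun i => term Adj x (i + k) b :=
    fun b _ => summable_term_nat_add Adj x k b
  calc ∑ b ∈ S, tail Adj x k b = ∑' i, ∑ b ∈ S, term Adj x (i + k) b :=
        (Summable.tsum_finsetSum hsum).symm
    _ ≤ ∑' i : ℕ, (1 / 2 : ℝ) ^ (i + k + 1) := by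
        refine Summable.tsum_le_tsum (fun i => sum_term_le Adj x (i + k) S) (summable_sum hsum) ?_
        simp_rw [pow_add]
        exact (summable_geometric_two.mul_right _).mul_right _
    _ = (1 / 2) ^ k := tsum_half_pow_add_succ k

theorem tail_mem_Icc (x : ℕ → A) (k : ℕ) (b : A) : tail Adj x k b ∈ Set.Icc (0 : ℝ) 1 := by
  refine ⟨tail_nonneg Adj x k b, ?_⟩
  calc tail Adj x k b = ∑ c ∈ {b}, tail Adj x k c := (Finset.sum_singleton _ _).symm
    _ ≤ (1 / 2) ^ k := sum_tail_le Adj x k {b}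
    _ ≤ 1 := pow_le_one₀ (by norm_num) (by norm_num)

theorem tsum_term_sub_tsum_term (x y : ℕ → A) {k : ℕ} (h : ∀ m < k, y m = x m) (b : A) :
    ∑' i, term Adj y i b - ∑' i, term Adj x i b = tail Adj y k b - tail Adj x k b := by
  have hhead : ∑ i ∈ Finset.range k, term Adj y i b = ∑ i ∈ Finset.range k, term Adj x i b :=
    Finset.sum_congr rfl fun i hi =>
      term_eq_of_eqOn Adj x y (fun j hj => h j (hj.trans_lt (Finset.mem_range.mp hi))) b
  rw [← (summable_term Adj y b).sum_add_tsum_nat_add k,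
    ← (summable_term Adj x b).sum_add_tsum_nat_add k, hhead, tail, tail]
  ring

end Lipscomb

open Lipscomb in
theorem stmt6_general {A : Type*} (Adj : A → A → Prop) (z : A)
    (p : (ℕ → A) → lp (fun _ : {a : A // a ≠ z} => ℝ) 2)
    (hp : ∀ (x : ℕ → A) (b : {a : A // a ≠ z}),
      (p x : ∀ _ : {a : A // a ≠ z}, ℝ) b
        = ∑' i : ℕ, ∏ j ∈ Finset.range (i + 1), lipC Adj (x j) (x i) (b : A))
    (xs : ℕ → ℕ → A) (x : ℕ → A)
    (hconv : ∀ k : ℕ, ∃ N : ℕ, ∀ n ≥ N, ∀ m < k, xs n m = x m) :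
    (∀ (n k : ℕ), (∀ m < k, xs n m = x m) → ‖p (xs n) - p x‖ ^ 2 ≤ 2 / 2 ^ k) ∧
    (∀ k : ℕ, ∃ N : ℕ, ∀ n ≥ N, ‖p (xs n) - p x‖ ^ 2 ≤ 2 / 2 ^ k) := by
  have agree : ∀ n k, (∀ m < k, xs n m = x m) → ‖p (xs n) - p x‖ ^ 2 ≤ 2 / 2 ^ k := by
    intro n k h
    refine lp.sq_norm_le_of_forall_sum_le fun S => ?_
    have hcoord : ∀ b : {a : A // a ≠ z}, ‖(p (xs n) - p x) b‖ ^ 2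
        = (tail Adj (xs n) k b - tail Adj x k b) ^ 2 := fun b => by
      rw [lp.coeFn_sub, Pi.sub_apply, hp, hp, Real.norm_eq_abs, sq_abs]
      exact congrArg (· ^ 2) (tsum_term_sub_tsum_term Adj x (xs n) h b)
    calc ∑ b ∈ S, ‖(p (xs n) - p x) b‖ ^ 2
        ≤ ∑ b ∈ S.map (Function.Embedding.subtype _), (tail Adj (xs n) k b + tail Adj x k b) := by
          rw [Finset.sum_map]
          exact Finset.sum_le_sum fun b _ => (hcoord b).trans_le <|
            sq_sub_le_add_of_mem_Icc (tail_mem_Icc Adj _ k b) (tail_mem_Icc Adj x k b)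
      _ ≤ (1 / 2) ^ k + (1 / 2) ^ k := by
          rw [Finset.sum_add_distrib]
          exact add_le_add (sum_tail_le Adj _ k _) (sum_tail_le Adj x k _)
      _ = 2 / 2 ^ k := by rw [one_div_pow]; ring
  refine ⟨agree, fun k => ?_⟩
  obtain ⟨N, hN⟩ := hconv k
  exact ⟨N, fun n hn => agree n k (hN n hn)⟩

/-- If `xⁿ → x` in the Baire space `A^ℕ` (i.e. for every `k` eventually `xⁿ`
agrees with `x` on the first `k` coordinates), then for every `k` there is `n_k`
such that for `n ≥ n_k` we have `‖p_𝒢(xⁿ) - p_𝒢(x)‖² ≤ 1/2^{k-1} = 2/2^k`; in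
particular this square bound holds whenever `xⁿ` agrees with `x` on the first
`k` coordinates. -/
theorem stmt6 {A : Type*} (hA : ∃ a b : A, a ≠ b) (Adj : A → A → Prop)
    (hrefl : ∀ a, Adj a a) (hsymm : ∀ a b, Adj a b → Adj b a) (z : A)
    (p : (ℕ → A) → lp (fun _ : {a : A // a ≠ z} => ℝ) 2)
    (hp : ∀ (x : ℕ → A) (b : {a : A // a ≠ z}),
      (p x : ∀ _ : {a : A // a ≠ z}, ℝ) b
        = ∑' i : ℕ, ∏ j ∈ Finset.range (i + 1), lipC Adj (x j) (x i) (b : A))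
    (xs : ℕ → ℕ → A) (x : ℕ → A)
    (hconv : ∀ k : ℕ, ∃ N : ℕ, ∀ n ≥ N, ∀ m < k, xs n m = x m) :
    (∀ (n k : ℕ), (∀ m < k, xs n m = x m) → ‖p (xs n) - p x‖ ^ 2 ≤ 2 / 2 ^ k) ∧
    (∀ k : ℕ, ∃ N : ℕ, ∀ n ≥ N, ‖p (xs n) - p x‖ ^ 2 ≤ 2 / 2 ^ k) :=
  stmt6_general Adj z p hp xs x hconv
end

section
/- Let 𝒮 = ((X,d),(f_i)_{i∈I}) be an iterated function system (finitely many contractions on a complete metric space) with attractor A_𝒮. If the family (f_i(A_𝒮))_{i∈I} is connected (i.e., the intersection graph on I where i,j are joined when f_i(A_𝒮) ∩ f_j(A_𝒮) ≠ ∅ is a connected graph), then A_𝒮 is a connected topological space. Conversely, if A_𝒮 is connected then the family (f_i(A_𝒮))_{i∈I} is connected. -/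
/-!
If the pieces `f i '' K` form a connected family, then by induction on `m` any two points of `K`
are joined by a chain in `K` with steps at most `c ^ m * diam K`, where `c < 1` is a common
Lipschitz constant: chains inside a piece are images of chains in `K`, and overlapping pieces are
linked through a common point. A compact set with such chains at every scale is connected, since
two disjoint closed parts of it would lie at positive distance. Conversely, a connected component
of the intersection graph that is not everything would split `K` into two disjoint nonempty
closed sets.
-/

open Relation Set Filter Topology

section EpsChained

variable {X : Type*} [PseudoMetricSpace X]

def EpsChained (s : Set X) (ε : ℝ) : X → X → Prop :=
  ReflTransGen fun x y => y ∈ s ∧ dist x y ≤ ε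

theorem EpsChained.mono {s : Set X} {ε δ : ℝ} (hεδ : ε ≤ δ) {x y : X}
    (h : EpsChained s ε x y) : EpsChained s δ x y :=
  ReflTransGen.mono (fun _ _ hab => ⟨hab.1, hab.2.trans hεδ⟩) _ _ h

theorem EpsChained.image {Y : Type*} [PseudoMetricSpace Y] {s : Set X} {t : Set Y} {g : X → Y}
    {c : NNReal} (hg : LipschitzWith c g) (hst : MapsTo g s t) {ε : ℝ} {x y : X}
    (h : EpsChained s ε x y) : EpsChained t (c * ε) (g x) (g y) :=
  ReflTransGen.lift g (fun _ _ hab => ⟨hst hab.1,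
    (hg.dist_le_mul _ _).trans (mul_le_mul_of_nonneg_left hab.2 c.coe_nonneg)⟩) _ _ h

theorem epsChained_iUnion_of_reflTransGen {ι : Type*} {s : ι → Set X} {t : Set X} {ε : ℝ}
    (H : ∀ i, ∀ x ∈ s i, ∀ y ∈ s i, EpsChained t ε x y)
    (K : ∀ i j, ReflTransGen (fun i j => (s i ∩ s j).Nonempty) i j) :
    ∀ x ∈ ⋃ i, s i, ∀ y ∈ ⋃ i, s i, EpsChained t ε x y := by
  simp only [mem_iUnion]
  rintro x ⟨i, hxi⟩ y ⟨j, hyj⟩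
  induction K i j generalizing y with
  | refl => exact H i x hxi y hyj
  | tail _ hkl ih =>
    obtain ⟨z, hzk, hzl⟩ := hkl
    exact (ih z hzk).trans (H _ z hzl y hyj)

theorem IsCompact.isPreconnected_of_forall_epsChained {K : Set X} (hK : IsCompact K)
    (h : ∀ ε > 0, ∀ x ∈ K, ∀ y ∈ K, EpsChained K ε x y) : IsPreconnected K := by
  rw [isPreconnected_closed_iff]
  rintro A B hA hB hcover ⟨a, haK, haA⟩ ⟨b, hbK, hbB⟩
  by_contra hKAB
  have hdisj : Disjoint (K ∩ A) B :=
    Set.disjoint_left.2 fun z hzA hzB => hKAB ⟨z, hzA.1, hzA.2, hzB⟩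
  obtain ⟨r, hr, hsep⟩ := Metric.exists_pos_forall_lt_edist (hK.inter_right hA) hB hdisj
  have hstay : ∀ y, EpsChained K (r / 2) a y → y ∈ K ∩ A := by
    intro y hy
    induction hy with
    | refl => exact ⟨haK, haA⟩
    | tail _ hstep ih =>
      obtain ⟨hzK, hdist⟩ := hstep
      refine ⟨hzK, (hcover hzK).resolve_right fun hzB => ?_⟩
      have hrz := hsep _ ih _ hzB
      rw [edist_dist, ENNReal.coe_nnreal_eq,
        ENNReal.ofReal_lt_ofReal_iff_of_nonneg r.coe_nonneg] at hrz
      linarith [r.coe_pos.2 hr]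
  exact hdisj.ne_of_mem (hstay b (h _ (by positivity) a haK b hbK)) hbB rfl

end EpsChained

theorem IsPreconnected.reflTransGen_of_iUnion {α ι : Type*} [TopologicalSpace α] [Finite ι]
    {s : ι → Set α} (H : IsPreconnected (⋃ i, s i)) (hs : ∀ i, IsClosed (s i))
    (hne : ∀ i, (s i).Nonempty) (i j : ι) :
    ReflTransGen (fun i j => (s i ∩ s j).Nonempty) i j := by
  by_contra hij
  set T := {k | ReflTransGen (fun i j => (s i ∩ s j).Nonempty) i k}
  have hcover : ⋃ k, s k ⊆ (⋃ k ∈ T, s k) ∪ ⋃ k ∈ Tᶜ, s k := by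
    refine iUnion_subset fun k => ?_
    by_cases hk : k ∈ T
    · exact subset_union_of_subset_left (subset_biUnion_of_mem (u := s) hk) _
    · exact subset_union_of_subset_right (subset_biUnion_of_mem (u := s) hk) _
  obtain ⟨x, hx⟩ := hne i
  obtain ⟨y, hy⟩ := hne j
  obtain ⟨z, -, hzT, hzT'⟩ := isPreconnected_closed_iff.1 H _ _
    ((toFinite T).isClosed_biUnion fun k _ => hs k)
    ((toFinite Tᶜ).isClosed_biUnion fun k _ => hs k)
    hcover ⟨x, mem_iUnion_of_mem i hx, mem_biUnion ReflTransGen.refl hx⟩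
    ⟨y, mem_iUnion_of_mem j hy, mem_biUnion hij hy⟩
  obtain ⟨k, hk, hzk⟩ := mem_iUnion₂.1 hzT
  obtain ⟨l, hl, hzl⟩ := mem_iUnion₂.1 hzT'
  exact hl (hk.tail ⟨z, hzk, hzl⟩)

theorem exists_forall_lipschitzWith_lt_one {ι α β : Type*} [Finite ι] [PseudoEMetricSpace α]
    [PseudoEMetricSpace β] {f : ι → α → β}
    (hf : ∀ i, ∃ K : NNReal, K < 1 ∧ LipschitzWith K (f i)) :
    ∃ c : NNReal, c < 1 ∧ ∀ i, LipschitzWith c (f i) := by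
  have := Fintype.ofFinite ι
  choose g hg1 hg using hf
  refine ⟨Finset.univ.sup g, ?_, fun i => (hg i).weaken (Finset.le_sup (Finset.mem_univ i))⟩
  exact (Finset.sup_lt_iff zero_lt_one).2 fun i _ => hg1 i

theorem epsChained_pow_mul_diam {X : Type*} [PseudoMetricSpace X] {I : Type*} {f : I → X → X}
    {K : Set X} {c : NNReal} (hc : ∀ i, LipschitzWith c (f i)) (hK : Bornology.IsBounded K)
    (hattr : K = ⋃ i, f i '' K)
    (hchain : ∀ i j, ReflTransGen (fun a b => (f a '' K ∩ f b '' K).Nonempty) i j) (m : ℕ) :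
    ∀ x ∈ K, ∀ y ∈ K, EpsChained K (c ^ m * Metric.diam K) x y := by
  induction m with
  | zero =>
    intro x hx y hy
    exact ReflTransGen.single ⟨hy, by simpa using Metric.dist_le_diam_of_mem hK hx hy⟩
  | succ m ih =>
    have hmaps : ∀ i, MapsTo (f i) K K := fun i x hx =>
      hattr ▸ mem_iUnion_of_mem i (mem_image_of_mem _ hx)
    have hpiece : ∀ i, ∀ x ∈ f i '' K, ∀ y ∈ f i '' K,
        EpsChained K (c ^ (m + 1) * Metric.diam K) x y := by
      rintro i _ ⟨x, hx, rfl⟩ _ ⟨y, hy, rfl⟩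
      simpa [pow_succ', mul_assoc] using (ih x hx y hy).image (hc i) (hmaps i)
    intro x hx y hy
    rw [hattr] at hx hy
    exact epsChained_iUnion_of_reflTransGen hpiece hchain x hx y hy

theorem stmt11_general {X : Type*} [MetricSpace X]
    {I : Type*} [Finite I]
    (f : I → X → X) (hf : ∀ i, ∃ K : NNReal, K < 1 ∧ LipschitzWith K (f i))
    (K : Set X) (hne : K.Nonempty) (hcp : IsCompact K)
    (hattr : K = ⋃ i, f i '' K) :
    (∀ i j : I,
        Relation.ReflTransGen (fun a b => (f a '' K ∩ f b '' K).Nonempty) i j)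
      ↔ IsConnected K := by
  obtain ⟨c, hc1, hc⟩ := exists_forall_lipschitzWith_lt_one hf
  constructor
  · intro hchain
    refine ⟨hne, hcp.isPreconnected_of_forall_epsChained fun ε hε x hx y hy => ?_⟩
    have hscale : Tendsto (fun m : ℕ => (c : ℝ) ^ m * Metric.diam K) atTop (𝓝 0) := by
      simpa using (tendsto_pow_atTop_nhds_zero_of_lt_one c.coe_nonneg hc1).mul_const _
    obtain ⟨m, hm⟩ := (hscale.eventually (gt_mem_nhds hε)).exists
    exact (epsChained_pow_mul_diam hc hcp.isBounded hattr hchain m x hx y hy).mono hm.le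
  · rintro ⟨-, hK⟩
    rw [hattr] at hK
    exact hK.reflTransGen_of_iUnion (fun i => (hcp.image (hc i).continuous).isClosed)
      fun i => hne.image _

/-- (Kigami) Let `𝒮 = ((X,d),(f_i)_{i∈I})` be an IFS (finitely many contractions
on a complete metric space) with attractor `K` (the unique nonempty compact set
with `K = ⋃_i f_i(K)`). The family `(f_i(K))_{i∈I}` is connected (any two
indices are joined by a finite chain with consecutive pieces intersecting) if
and only if `K` is a connected set. -/
theorem stmt11 {X : Type*} [MetricSpace X] [CompleteSpace X]
    {I : Type*} [Finite I] [Nonempty I]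
    (f : I → X → X) (hf : ∀ i, ∃ K : NNReal, K < 1 ∧ LipschitzWith K (f i))
    (K : Set X) (hne : K.Nonempty) (hcp : IsCompact K)
    (hattr : K = ⋃ i, f i '' K) :
    (∀ i j : I,
        Relation.ReflTransGen (fun a b => (f a '' K ∩ f b '' K).Nonempty) i j)
      ↔ IsConnected K :=
  stmt11_general f hf K hne hcp hattr
end

section
/- If the graph 𝒢 = (A,E) is disconnected, then the quotient space J_A^𝒢 = A^ℕ/∼_𝒢 is a disconnected topological space. -/
theorem GRel.head_eq_or_adj {A : Type*} {Adj : A → A → Prop} {x y : ℕ → A}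
    (h : GRel Adj x y) : x 0 = y 0 ∨ Adj (x 0) (y 0) := by
  rcases h with rfl | ⟨n, a, b, hab, hlt, rfl, rfl, -⟩
  · exact .inl rfl
  · cases n with
    | zero => exact .inr hab
    | succ k => exact .inl (hlt 0 k.succ_pos)

theorem GRel.head_mem {A : Type*} {Adj : A → A → Prop} {S : Set A}
    (hS : ∀ a ∈ S, ∀ b, Adj a b → b ∈ S) {x y : ℕ → A} (h : GRel Adj x y) (hx : x 0 ∈ S) :
    y 0 ∈ S := by
  rcases h.head_eq_or_adj with hxy | hxy
  · exact hxy ▸ hx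
  · exact hS _ hx _ hxy

theorem Quotient.not_preconnectedSpace_of_isClopen {X : Type*} [TopologicalSpace X]
    (s : Setoid X) {U : Set X} (hU : IsClopen U) (hsat : ∀ x y, s.r x y → x ∈ U → y ∈ U)
    (hne : U.Nonempty) (hne' : Uᶜ.Nonempty) : ¬PreconnectedSpace (Quotient s) := by
  intro _
  have hpre : Quotient.mk s ⁻¹' (Quotient.mk s '' U) = U := by
    refine subset_antisymm ?_ (Set.subset_preimage_image _ _)
    rintro y ⟨x, hx, hxy⟩
    exact hsat x y (Quotient.exact hxy) hx
  have hV : IsClopen (Quotient.mk s '' U) :=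
    isQuotientMap_quotient_mk'.isClopen_preimage.mp (by rwa [← hpre] at hU)
  rcases isClopen_iff.mp hV with hV | hV
  · exact (hne.image _).ne_empty hV
  · rw [hV, Set.preimage_univ] at hpre
    exact hne'.ne_empty (by rw [← hpre, Set.compl_univ])

theorem stmt15_general {A : Type*} (Adj : A → A → Prop)
    (hdis : ∃ S T : Set A, S.Nonempty ∧ T.Nonempty ∧ S ∪ T = Set.univ ∧
      S ∩ T = ∅ ∧ ∀ s ∈ S, ∀ t ∈ T, ¬Adj s t)
    (Sd : Setoid (ℕ → A)) (hSd : ∀ x y, Sd.r x y ↔ GRel Adj x y) :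
    ¬@ConnectedSpace (Quotient Sd)
      (@instTopologicalSpaceQuotient _ Sd
        (@Pi.topologicalSpace ℕ (fun _ => A) (fun _ => ⊥))) := by
  obtain ⟨S, T, ⟨s, hs⟩, ⟨t, ht⟩, hunion, hinter, hedge⟩ := hdis
  let : TopologicalSpace A := ⊥
  have : DiscreteTopology A := ⟨rfl⟩
  have hS : ∀ a ∈ S, ∀ b, Adj a b → b ∈ S := fun a ha b hab ↦ by
    by_contra hb
    have : b ∈ S ∪ T := hunion ▸ Set.mem_univ b
    exact hedge a ha b (this.resolve_left hb) hab
  have htS : t ∉ S := fun htS ↦ (hinter ▸ ⟨htS, ht⟩ : t ∈ (∅ : Set A))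
  exact fun _ ↦ Quotient.not_preconnectedSpace_of_isClopen Sd (U := {x | x 0 ∈ S})
    ((isClopen_discrete S).preimage (continuous_apply 0))
    (fun x y hxy ↦ ((hSd x y).mp hxy).head_mem hS) ⟨fun _ ↦ s, hs⟩ ⟨fun _ ↦ t, htS⟩ inferInstance

/-- If the graph `𝒢 = (A,E)` is disconnected (there is a partition `A = S ∪ T`
into nonempty sets with no edge between `S` and `T`), then the graph Lipscomb
space `J_A^𝒢 = A^ℕ/∼_𝒢` (quotient of the product of discrete spaces) is a
disconnected topological space. -/
theorem stmt15 {A : Type*} (hA : ∃ a b : A, a ≠ b) (Adj : A → A → Prop)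
    (hrefl : ∀ a, Adj a a) (hsymm : ∀ a b, Adj a b → Adj b a)
    (hdis : ∃ S T : Set A, S.Nonempty ∧ T.Nonempty ∧ S ∪ T = Set.univ ∧
      S ∩ T = ∅ ∧ ∀ s ∈ S, ∀ t ∈ T, ¬Adj s t)
    (Sd : Setoid (ℕ → A)) (hSd : ∀ x y, Sd.r x y ↔ GRel Adj x y) :
    ¬@ConnectedSpace (Quotient Sd)
      (@instTopologicalSpaceQuotient _ Sd
        (@Pi.topologicalSpace ℕ (fun _ => A) (fun _ => ⊥))) :=
  stmt15_general Adj hdis Sd hSd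
end

section
/- Let G be the inverse limit of an inverse sequence of finite connected graphs (G_n) with proper epimorphic bonding maps, equipped with the limit adjacency relation x ∼ y iff x_n is adjacent to y_n in G_n for all n. Then for every partition of the limit vertex set into two nonempty clopen sets U and W, there exist u ∈ U and w ∈ W with u ∼ w. -/
section Down
variable {V : ℕ → Type*} (g : ∀ n, V (n + 1) → V n)

/-- Iterated downward bonding map. -/
def invDown {i : ℕ} : ∀ {j : ℕ}, i ≤ j → V j → V i :=
  fun h x => Nat.leRecOn (C := fun k => V k → V i) h
    (fun {k} (f : V k → V i) (y : V (k+1)) => f (g k y)) id x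

lemma invDown_self {i : ℕ} (h : i ≤ i) (x : V i) : invDown g h x = x := by
  unfold invDown
  exact congrFun (Nat.leRecOn_self (C := fun k => V k → V i)
    (next := fun {k} (f : V k → V i) (y : V (k+1)) => f (g k y)) id) x

lemma invDown_succ {i j : ℕ} (h : i ≤ j + 1) (h' : i ≤ j) (x : V (j + 1)) :
    invDown g h x = invDown g h' (g j x) := by
  unfold invDown
  exact congrFun (Nat.leRecOn_succ (C := fun k => V k → V i)
    (next := fun {k} (f : V k → V i) (y : V (k+1)) => f (g k y)) h' id) x

lemma g_invDown {i : ℕ} : ∀ {j : ℕ} (h : i + 1 ≤ j) (h' : i ≤ j) (x : V j),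
    g i (invDown g h x) = invDown g h' x := by
  intro j
  induction j with
  | zero => intro h; omega
  | succ j ih =>
    intro h h' x
    rw [invDown_succ g h' (by omega) x]
    rcases Nat.lt_or_ge i j with hij | hij
    · rw [invDown_succ g h (by omega) x]
      exact ih (by omega) (by omega) (g j x)
    · have : i = j := by omega
      subst this
      rw [invDown_self g h x, invDown_self g (by omega) (g i x)]
end Down

/-- A proper epimorphism: a surjection such that two vertices of the codomain
are adjacent iff they are images of some pair of adjacent vertices. -/
def IsProperEpi {V W : Type*} (rG : V → V → Prop) (rH : W → W → Prop)
    (f : V → W) : Prop :=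
  Function.Surjective f ∧
    ∀ x' y', rH x' y' ↔ ∃ x y, rG x y ∧ f x = x' ∧ f y = y'

/-- The vertex set of the inverse limit of an inverse sequence of graphs with
bonding maps `g n : V (n+1) → V n`: the space of threads. -/
abbrev InvLim {V : ℕ → Type*} (g : ∀ n, V (n + 1) → V n) : Type _ :=
  {x : ∀ n, V n // ∀ n, g n (x (n + 1)) = x n}

/-- The topology on the inverse limit: the subspace topology inherited from the
product of the discrete spaces `V n`. -/
instance invLimTopology {V : ℕ → Type*} (g : ∀ n, V (n + 1) → V n) :
    TopologicalSpace (InvLim g) :=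
  ⨅ n, TopologicalSpace.induced (fun x : InvLim g => x.1 n) ⊥

/-- Every point of a stage extends to a thread, given surjective bonding maps. -/
lemma invLim_proj_surj {V : ℕ → Type*} (g : ∀ n, V (n + 1) → V n)
    (hg : ∀ n, Function.Surjective (g n)) (n : ℕ) (v : V n) :
    ∃ x : InvLim g, x.1 n = v := by
  classical
  let s : ∀ m, V (n + m) := fun m =>
    Nat.rec v (fun m sm => Function.surjInv (hg (n + m)) sm) m
  have hs : ∀ m, g (n + m) (s (m + 1)) = s m := fun m =>
    Function.surjInv_eq (hg (n + m)) (s m)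
  have hthread : ∀ k, g k (invDown g (Nat.le_add_left (k+1) n) (s (k+1)))
      = invDown g (Nat.le_add_left k n) (s k) := by
    intro k
    have h1 : g k (invDown g (Nat.le_add_left (k+1) n) (s (k+1)))
        = invDown g (show k ≤ n + (k+1) by omega) (s (k+1)) :=
      g_invDown g _ _ (s (k+1))
    rw [h1, invDown_succ g (show k ≤ n + (k+1) by omega) (Nat.le_add_left k n) (s (k+1))]
    congr 1
    exact hs k
  refine ⟨⟨fun k => invDown g (Nat.le_add_left k n) (s k), hthread⟩, ?_⟩
  show invDown g (Nat.le_add_left n n) (s n) = v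
  have key : ∀ m (h : n ≤ n + m), invDown g h (s m) = v := by
    intro m
    induction m with
    | zero => intro h; exact invDown_self g h v
    | succ m ih =>
      intro h
      rw [invDown_succ g h (Nat.le_add_right n m) (s (m+1))]
      simp only [Nat.add_eq]
      rw [hs m]
      exact ih _
  exact key n _

/-- Let `G` be the inverse limit of finite connected graphs with proper
epimorphic bonding maps, with limit adjacency `x ∼ y ↔ ∀ n, x_n ∼ y_n`. Then
for every partition of the limit into two nonempty clopen sets `U`, `W` there
are `u ∈ U`, `w ∈ W` with `u ∼ w`. -/
theorem stmt18 {V : ℕ → Type*} [∀ n, Finite (V n)]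
    (rel : ∀ n, V n → V n → Prop)
    (hrefl : ∀ n x, rel n x x) (hsymm : ∀ n x y, rel n x y → rel n y x)
    (g : ∀ n, V (n + 1) → V n)
    (hepi : ∀ n, IsProperEpi (rel (n + 1)) (rel n) (g n))
    (hconn : ∀ n (u v : V n), Relation.ReflTransGen (rel n) u v)
    (U W : Set (InvLim g))
    (hUo : IsOpen U) (hUc : IsClosed U) (hWo : IsOpen W) (hWc : IsClosed W)
    (hUne : U.Nonempty) (hWne : W.Nonempty)
    (hcover : U ∪ W = Set.univ) (hdisj : U ∩ W = ∅) :
    ∃ u ∈ U, ∃ w ∈ W, ∀ n, rel n (u.1 n) (w.1 n) := by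
  classical
  letI : ∀ n, TopologicalSpace (V n) := fun _ => ⊥
  haveI : ∀ n, DiscreteTopology (V n) := fun n => ⟨rfl⟩
  haveI : ∀ n, CompactSpace (V n) := fun n => Finite.compactSpace
  -- the limit topology is the subspace topology of the product
  have htop : invLimTopology g =
      (instTopologicalSpaceSubtype : TopologicalSpace (InvLim g)) := by
    show _ = TopologicalSpace.induced (Subtype.val) Pi.topologicalSpace
    rw [Pi.topologicalSpace, induced_iInf]
    simp only [induced_compose]
    rfl
  -- projections are continuous
  have hcontProj : ∀ n, Continuous (fun x : InvLim g => x.1 n) := by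
    intro n
    exact continuous_iInf_dom (i := n) continuous_induced_dom
  -- the limit is compact
  have hsetClosed : IsClosed {x : ∀ n, V n | ∀ n, g n (x (n + 1)) = x n} := by
    have : {x : ∀ n, V n | ∀ n, g n (x (n + 1)) = x n}
        = ⋂ n, {x : ∀ n, V n | g n (x (n + 1)) = x n} := by
      ext x; simp
    rw [this]
    refine isClosed_iInter fun n => ?_
    have hcont : Continuous (fun x : ∀ n, V n => (g n (x (n + 1)), x n)) :=
      Continuous.prodMk (Continuous.comp continuous_of_discreteTopology
        (continuous_apply (n + 1))) (continuous_apply n)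
    exact IsClosed.preimage hcont (isClosed_discrete {p : V n × V n | p.1 = p.2})
  haveI hcs : CompactSpace (InvLim g) := by
    rw [show invLimTopology g = _ from htop]
    exact isCompact_iff_compactSpace.mp hsetClosed.isCompact
  -- surjectivity of projections
  have hg : ∀ n, Function.Surjective (g n) := fun n => (hepi n).1
  -- each stage has a crossing edge realized by threads
  have hcross : ∀ n, ∃ u ∈ U, ∃ w ∈ W, rel n (u.1 n) (w.1 n) := by
    intro n
    obtain ⟨u0, hu0⟩ := hUne
    obtain ⟨w0, hw0⟩ := hWne
    have hPQ : ∀ v : V n, (∃ x ∈ U, x.1 n = v) ∨ (∃ x ∈ W, x.1 n = v) := by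
      intro v
      obtain ⟨x, hx⟩ := invLim_proj_surj g hg n v
      have : x ∈ U ∪ W := by rw [hcover]; trivial
      rcases this with h | h
      · exact Or.inl ⟨x, h, hx⟩
      · exact Or.inr ⟨x, h, hx⟩
    have walk := hconn n (u0.1 n) (w0.1 n)
    have main : ∀ v, Relation.ReflTransGen (rel n) (u0.1 n) v →
        (∃ u ∈ U, ∃ w ∈ W, rel n (u.1 n) (w.1 n)) ∨ (∃ x ∈ U, x.1 n = v) := by
      intro v h
      induction h with
      | refl => exact Or.inr ⟨u0, hu0, rfl⟩
      | tail h1 h2 ih =>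
        rcases ih with done | ⟨u, huU, hun⟩
        · exact Or.inl done
        · rcases hPQ _ with ⟨u', hu'U, hu'n⟩ | ⟨w, hwW, hwn⟩
          · exact Or.inr ⟨u', hu'U, hu'n⟩
          · refine Or.inl ⟨u, huU, w, hwW, ?_⟩
            rw [hun, hwn]; exact h2
    rcases main _ walk with done | ⟨u, huU, hun⟩
    · exact done
    · exact ⟨u, huU, w0, hw0, hun ▸ hrefl n _⟩
  -- adjacency pushes down
  have hpush : ∀ n (x y : InvLim g), rel (n + 1) (x.1 (n + 1)) (y.1 (n + 1)) →
      rel n (x.1 n) (y.1 n) := by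
    intro n x y h
    have := ((hepi n).2 (x.1 n) (y.1 n)).mpr
      ⟨x.1 (n + 1), y.1 (n + 1), h, x.2 n, y.2 n⟩
    exact this
  -- compactness argument
  set K : ℕ → Set (InvLim g × InvLim g) := fun n =>
    (U ×ˢ W) ∩ {p | rel n (p.1.1 n) (p.2.1 n)} with hK
  have hKclosed : ∀ n, IsClosed (K n) := by
    intro n
    refine IsClosed.inter (hUc.prod hWc) ?_
    have hcont : Continuous (fun p : InvLim g × InvLim g => (p.1.1 n, p.2.1 n)) :=
      Continuous.prodMk ((hcontProj n).comp continuous_fst)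
        ((hcontProj n).comp continuous_snd)
    exact IsClosed.preimage hcont (isClosed_discrete {q : V n × V n | rel n q.1 q.2})
  have hKmono : ∀ n, K (n + 1) ⊆ K n := by
    intro n p hp
    exact ⟨hp.1, hpush n p.1 p.2 hp.2⟩
  have hKne : ∀ n, (K n).Nonempty := by
    intro n
    obtain ⟨u, huU, w, hwW, hr⟩ := hcross n
    exact ⟨(u, w), ⟨huU, hwW⟩, hr⟩
  have hInter : (⋂ n, K n).Nonempty :=
    IsCompact.nonempty_iInter_of_sequence_nonempty_isCompact_isClosed K hKmono hKne
      ((hKclosed 0).isCompact) hKclosed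
  obtain ⟨p, hp⟩ := hInter
  have h0 := Set.mem_iInter.mp hp 0
  refine ⟨p.1, h0.1.1, p.2, h0.1.2, fun n => ?_⟩
  exact (Set.mem_iInter.mp hp n).2
end

section
/- Let G be the inverse limit of an inverse sequence of finite graphs (G_n) with proper epimorphic bonding maps, with limit relation ∼ defined coordinatewise, and assume ∼ is transitive (hence an equivalence relation). Then the quotient topological space G/∼ is connected if and only if every graph G_n is connected. -/
lemma exists_thread : ∀ (n : ℕ) {V : ℕ → Type*} (g : ∀ m, V (m + 1) → V m)
    (_ : ∀ m, Function.Surjective (g m)) (v : V n),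
    ∃ x : ∀ m, V m, (∀ m, g m (x (m + 1)) = x m) ∧ x n = v := by
  intro n
  induction n with
  | zero =>
    intro V g hsurj v
    choose s hs using hsurj
    exact ⟨fun m => Nat.rec v (fun m w => s m w) m, fun m => hs m _, rfl⟩
  | succ n ih =>
    intro V g hsurj v
    obtain ⟨y, hy, hyn⟩ := ih (V := fun m => V (m + 1)) (fun m => g (m + 1)) (fun m => hsurj (m + 1)) v
    refine ⟨fun m => Nat.rec (g 0 (y 0)) (fun m _ => y m) m, fun m => ?_, hyn⟩
    cases m with
    | zero => rfl
    | succ m => exact hy m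

lemma invLim_continuous_proj {V : ℕ → Type*} (g : ∀ n, V (n + 1) → V n) (n : ℕ) :
    @Continuous _ _ (invLimTopology g) ⊥ (fun x : InvLim g => x.1 n) :=
  continuous_iInf_dom continuous_induced_dom

lemma invLim_isClopen_preimage {V : ℕ → Type*} (g : ∀ n, V (n + 1) → V n) (n : ℕ)
    (A : Set (V n)) : IsClopen ((fun x : InvLim g => x.1 n) ⁻¹' A) := by
  letI : TopologicalSpace (V n) := ⊥
  haveI : DiscreteTopology (V n) := ⟨rfl⟩
  exact (isClopen_discrete A).preimage (invLim_continuous_proj g n)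

lemma invLim_compactSpace {V : ℕ → Type*} [∀ n, Finite (V n)] (g : ∀ n, V (n + 1) → V n) :
    CompactSpace (InvLim g) := by
  letI t : ∀ n, TopologicalSpace (V n) := fun _ => ⊥
  haveI : ∀ n, DiscreteTopology (V n) := fun n => ⟨rfl⟩
  have htop : invLimTopology g =
      @instTopologicalSpaceSubtype (∀ n, V n) _ Pi.topologicalSpace := by
    simp only [instTopologicalSpaceSubtype, Pi.topologicalSpace, induced_iInf, induced_compose]
    rfl
  rw [htop]
  have hclosed : IsClosed {x : ∀ n, V n | ∀ n, g n (x (n + 1)) = x n} := by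
    have heq : {x : ∀ n, V n | ∀ n, g n (x (n + 1)) = x n} =
        ⋂ n, {x : ∀ n, V n | g n (x (n + 1)) = x n} := by
      ext x; simp [Set.mem_iInter]
    rw [heq]
    exact isClosed_iInter fun n =>
      isClosed_eq (continuous_of_discreteTopology.comp (continuous_apply (n + 1)))
        (continuous_apply n)
  exact isCompact_iff_compactSpace.mp hclosed.isCompact

lemma invLim_isClopen_pair {V : ℕ → Type*} [∀ n, Finite (V n)] (g : ∀ n, V (n + 1) → V n)
    (n : ℕ) (R : V n → V n → Prop) :
    IsClopen {p : InvLim g × InvLim g | R (p.1.1 n) (p.2.1 n)} := by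
  have heq : {p : InvLim g × InvLim g | R (p.1.1 n) (p.2.1 n)} =
      ⋃ (q : V n × V n) (_ : R q.1 q.2),
        (Prod.fst ⁻¹' ((fun x : InvLim g => x.1 n) ⁻¹' {q.1})) ∩
        (Prod.snd ⁻¹' ((fun x : InvLim g => x.1 n) ⁻¹' {q.2})) := by
    ext p
    simp only [Set.mem_setOf_eq, Set.mem_iUnion, Set.mem_inter_iff, Set.mem_preimage,
      Set.mem_singleton_iff]
    constructor
    · intro h; exact ⟨(p.1.1 n, p.2.1 n), h, rfl, rfl⟩
    · rintro ⟨q, hq, h1, h2⟩; rw [h1, h2]; exact hq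
  have hpiece : ∀ q : V n × V n, IsClopen
      ((Prod.fst ⁻¹' ((fun x : InvLim g => x.1 n) ⁻¹' {q.1})) ∩
        (Prod.snd ⁻¹' ((fun x : InvLim g => x.1 n) ⁻¹' {q.2})) : Set (InvLim g × InvLim g)) :=
    fun q => ((invLim_isClopen_preimage g n {q.1}).preimage continuous_fst).inter
      ((invLim_isClopen_preimage g n {q.2}).preimage continuous_snd)
  rw [heq]
  constructor
  · refine isClosed_iUnion_of_finite fun q => ?_
    exact isClosed_iUnion_of_finite fun _ => (hpiece q).isClosed
  · exact isOpen_iUnion fun q => isOpen_iUnion fun _ => (hpiece q).isOpen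


/-- Let `G` be the inverse limit of an inverse sequence of finite graphs with
proper epimorphic bonding maps, and suppose the coordinatewise limit relation
`x ∼ y ↔ ∀ n, x_n ∼ y_n` is an equivalence relation (i.e. it is transitive;
reflexivity and symmetry are automatic). Then the quotient topological space
`G/∼` is connected iff every graph `G_n` is connected. -/
theorem stmt19 {V : ℕ → Type*} [∀ n, Finite (V n)] [∀ n, Nonempty (V n)]
    (rel : ∀ n, V n → V n → Prop)
    (hrefl : ∀ n x, rel n x x) (hsymm : ∀ n x y, rel n x y → rel n y x)
    (g : ∀ n, V (n + 1) → V n)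
    (hepi : ∀ n, IsProperEpi (rel (n + 1)) (rel n) (g n))
    (S : Setoid (InvLim g))
    (hS : ∀ x y : InvLim g, S.r x y ↔ ∀ n, rel n (x.1 n) (y.1 n)) :
    ConnectedSpace (Quotient S) ↔
      ∀ n (u v : V n), Relation.ReflTransGen (rel n) u v := by
  classical
  have hsurj : ∀ n, Function.Surjective (g n) := fun n => (hepi n).1
  have hdown : ∀ n x y, rel (n + 1) x y → rel n (g n x) (g n y) :=
    fun n x y h => ((hepi n).2 _ _).mpr ⟨x, y, h, rfl, rfl⟩
  have hstep : ∀ (x y : InvLim g) (n : ℕ),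
      rel (n + 1) (x.1 (n + 1)) (y.1 (n + 1)) → rel n (x.1 n) (y.1 n) := by
    intro x y n h
    have := hdown n _ _ h
    rwa [x.2 n, y.2 n] at this
  have thread : ∀ n (v : V n), ∃ x : InvLim g, x.1 n = v := by
    intro n v
    obtain ⟨x, hx, hxn⟩ := exists_thread n g hsurj v
    exact ⟨⟨x, hx⟩, hxn⟩
  have hqm : Topology.IsQuotientMap (Quotient.mk S) := isQuotientMap_quotient_mk'
  constructor
  · intro hconn n u v
    set A : Set (InvLim g) := {x | Relation.ReflTransGen (rel n) u (x.1 n)} with hA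
    have hsat : Quotient.mk S ⁻¹' (Quotient.mk S '' A) = A := by
      ext x
      simp only [Set.mem_preimage, Set.mem_image, hA, Set.mem_setOf_eq]
      constructor
      · rintro ⟨a, ha, hax⟩
        exact ha.tail ((hS a x).mp (Quotient.exact hax) n)
      · intro hx; exact ⟨x, hx, rfl⟩
    have hclopenA : IsClopen A :=
      invLim_isClopen_preimage g n {w | Relation.ReflTransGen (rel n) u w}
    have hclopen : IsClopen (Quotient.mk S '' A) := by
      constructor
      · rw [← hqm.isClosed_preimage, hsat]; exact hclopenA.isClosed
      · rw [← hqm.isOpen_preimage, hsat]; exact hclopenA.isOpen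
    rcases isClopen_iff.mp hclopen with hemp | huniv
    · exfalso
      obtain ⟨x0, hx0⟩ := thread n u
      have hmem : Quotient.mk S x0 ∈ Quotient.mk S '' A :=
        ⟨x0, show Relation.ReflTransGen (rel n) u (x0.1 n) by rw [hx0], rfl⟩
      rw [hemp] at hmem
      exact hmem
    · obtain ⟨y0, hy0⟩ := thread n v
      have hmem : Quotient.mk S y0 ∈ Quotient.mk S '' A := huniv ▸ Set.mem_univ _
      obtain ⟨a, ha, hay⟩ := hmem
      have h2 := (hS a y0).mp (Quotient.exact hay) n
      rw [hy0] at h2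
      exact ha.tail h2
  · intro hconn
    haveI := invLim_compactSpace g
    obtain ⟨x00, -⟩ := thread 0 (Classical.arbitrary (V 0))
    refine { toNonempty := ⟨Quotient.mk S x00⟩, toPreconnectedSpace := ⟨?_⟩ }
    intro u v hu hv hcov hune hvne
    obtain ⟨pu, -, hpu⟩ := hune
    obtain ⟨pv, -, hpv⟩ := hvne
    by_contra hcon
    set U : Set (InvLim g) := Quotient.mk S ⁻¹' u with hU
    set W : Set (InvLim g) := Quotient.mk S ⁻¹' v with hW
    have hcovUW : ∀ z : InvLim g, z ∈ U ∨ z ∈ W := fun z =>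
      (hcov (Set.mem_univ (Quotient.mk S z)) : _ ∨ _)
    have hdisj : ∀ z : InvLim g, z ∈ U → z ∈ W → False := by
      intro z h1 h2
      exact hcon ⟨Quotient.mk S z, Set.mem_univ _, h1, h2⟩
    have hUopen : IsOpen U := hu.preimage continuous_quotient_mk'
    have hWopen : IsOpen W := hv.preimage continuous_quotient_mk'
    have hUWc : U = Wᶜ := by
      ext z
      constructor
      · intro hz hzW; exact hdisj z hz hzW
      · intro hz; exact (hcovUW z).resolve_right hz
    have hUclosed : IsClosed U := by rw [hUWc]; exact hWopen.isClosed_compl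
    have hWclosed : IsClosed W := by
      rw [show W = Uᶜ by rw [hUWc, compl_compl]]
      exact hUopen.isClosed_compl
    obtain ⟨x0, rfl⟩ := Quotient.exists_rep pu
    obtain ⟨y0, rfl⟩ := Quotient.exists_rep pv
    have hx0U : x0 ∈ U := hpu
    have hy0W : y0 ∈ W := hpv
    set P : ℕ → Set (InvLim g × InvLim g) :=
      fun n => {p | p.1 ∈ U ∧ p.2 ∈ W ∧ rel n (p.1.1 n) (p.2.1 n)} with hP
    have hPclosed : ∀ n, IsClosed (P n) := by
      intro n
      have heq : P n = (Prod.fst ⁻¹' U) ∩ ((Prod.snd ⁻¹' W) ∩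
          {p : InvLim g × InvLim g | rel n (p.1.1 n) (p.2.1 n)}) := rfl
      rw [heq]
      exact (hUclosed.preimage continuous_fst).inter
        ((hWclosed.preimage continuous_snd).inter (invLim_isClopen_pair g n (rel n)).isClosed)
    have hPdec : ∀ n, P (n + 1) ⊆ P n := fun n p hp => ⟨hp.1, hp.2.1, hstep _ _ n hp.2.2⟩
    have hPne : ∀ n, (P n).Nonempty := by
      intro n
      have hrt := hconn n (x0.1 n) (y0.1 n)
      have key : ∀ c, Relation.ReflTransGen (rel n) (x0.1 n) c →
          ∀ z : InvLim g, z.1 n = c → z ∈ W → (P n).Nonempty := by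
        intro c h
        induction h with
        | refl =>
          intro z hz hzW
          refine ⟨(x0, z), hx0U, hzW, ?_⟩
          rw [hz]; exact hrefl n _
        | @tail b c h1 h2 ih =>
          intro z hz hzW
          obtain ⟨w, hw⟩ := thread n b
          by_cases hwW : w ∈ W
          · exact ih w hw hwW
          · refine ⟨(w, z), (hcovUW w).resolve_right hwW, hzW, ?_⟩
            rw [hw, hz]; exact h2
      exact key _ hrt y0 rfl hy0W
    obtain ⟨⟨x, y⟩, hxy⟩ :=
      IsCompact.nonempty_iInter_of_sequence_nonempty_isCompact_isClosed P hPdec hPne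
        ((hPclosed 0).isCompact) hPclosed
    have hxyall : ∀ n, rel n (x.1 n) (y.1 n) := fun n => (Set.mem_iInter.mp hxy n).2.2
    have hxU : x ∈ U := (Set.mem_iInter.mp hxy 0).1
    have hyW : y ∈ W := (Set.mem_iInter.mp hxy 0).2.1
    have hmk : Quotient.mk S x = Quotient.mk S y := Quotient.sound ((hS x y).mpr hxyall)
    refine hdisj y ?_ hyW
    show Quotient.mk S y ∈ u
    rw [← hmk]
    exact hxU
end
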